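/- arXiv:0906.4383 — 5 statements merged into one kernel-verified Lean document; each statement's English description precedes it below -/
import Mathlib

section
/- Let O be a discrete valuation ring with uniformizer π and let m ≥ 1 be a natural number. Let A be a commutative ring equipped with an O/(π^m)-algebra structure such that A is flat as a module over O/(π^m), and let B be a commutative A-algebra that is finitely generated as an A-module and is flat as a module over O/(π^m). If the quotient B/πB is flat as a module over A/πA, then B is flat as a module over A. (This is the ring-theoretic form of the Claim in the proof of Theorem 2.1: a finite morphism of flat O/π^m O-schemes which is flat modulo π is flat.) -/
/-!
Flatness is tested with the equational criterion. Let `t` be the image of `π` in `A`, so that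
`t ^ m = 0`. By induction on `k ≤ m`, every relation `∑ fᵢ xᵢ ∈ t ^ k B` is trivial modulo
`t ^ k`, which for `k = m` is plain triviality. In the step, a trivialisation
`xᵢ = ∑ aᵢⱼ yⱼ + t ^ k zᵢ`, `∑ fᵢ aᵢⱼ = t ^ k gⱼ` turns the relation into
`t ^ k (∑ gⱼ yⱼ + ∑ fᵢ zᵢ) ∈ t ^ (k + 1) B`, and the bracket lies in `tB` because the
`t ^ k`-torsion of `B` does for `k < m`: `B` is flat over `O/(π^m)`, whose `π ^ k`-torsion is
`π ^ (m - k) O/(π^m)`. Flatness of `B/tB` over `A/tA` trivialises this new relation modulo `t`,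
and substituting it gives a trivialisation modulo `t ^ (k + 1)`.
-/

namespace Module

variable {A M : Type*} [CommRing A] [AddCommGroup M] [Module A M]

def IsTrivialRelationModulo (r : A) {ι : Type} [Fintype ι] (f : ι → A) (x : ι → M) : Prop :=
  ∃ (κ : Type) (_ : Fintype κ) (a : ι → κ → A) (y : κ → M) (z : ι → M),
    (∀ i, x i = ∑ j, a i j • y j + r • z i) ∧ ∀ j, r ∣ ∑ i, f i * a i j

variable {ι : Type} [Fintype ι] {f : ι → A} {x : ι → M}

theorem isTrivialRelationModulo_one : IsTrivialRelationModulo (1 : A) f x :=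
  ⟨Empty, inferInstance, fun _ => Empty.elim, Empty.elim, x, fun i => by simp,
    fun j => j.elim⟩

theorem IsTrivialRelationModulo.isTrivialRelation (h : IsTrivialRelationModulo (0 : A) f x) :
    IsTrivialRelation f x := by
  obtain ⟨κ, _, a, y, z, hx, hfa⟩ := h
  let e := (Fintype.equivFin κ).symm
  refine ⟨Fintype.card κ, fun i j => a i (e j), fun j => y (e j), fun i => ?_, fun j => ?_⟩
  · rw [hx i, zero_smul, add_zero]
    exact (e.sum_comp fun j => a i j • y j).symm
  · exact zero_dvd_iff.mp (hfa (e j))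

theorem sum_smul_eq_smul_sum_add_sum {r : A} {κ : Type} [Fintype κ] {a : ι → κ → A} {y : κ → M}
    {z : ι → M} {g : κ → A} (hx : ∀ i, x i = ∑ j, a i j • y j + r • z i)
    (hfa : ∀ j, ∑ i, f i * a i j = r * g j) :
    ∑ i, f i • x i = r • (∑ j, g j • y j + ∑ i, f i • z i) := by
  simp only [hx, smul_add, Finset.smul_sum, Finset.sum_add_distrib, smul_smul, ← hfa,
    Finset.sum_smul]
  rw [Finset.sum_comm]
  simp only [mul_comm, ← smul_smul, smul_comm r]

theorem isTrivialRelationModulo_mul {r s : A} {κ : Type} [Fintype κ] {a : ι → κ → A}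
    {y : κ → M} {z : ι → M} {g : κ → A} (hx : ∀ i, x i = ∑ j, a i j • y j + r • z i)
    (hfa : ∀ j, ∑ i, f i * a i j = r * g j)
    (h : IsTrivialRelationModulo s (Sum.elim g f) (Sum.elim y z)) :
    IsTrivialRelationModulo (r * s) f x := by
  obtain ⟨ν, _, b, w, u, hyz, hgf⟩ := h
  -- `x = a (b w + s u) + r (b' w + s u')`, regrouped along the generators `w` and `u`
  refine ⟨ν ⊕ κ, inferInstance,
    fun i => Sum.elim (fun l => ∑ j, a i j * b (.inl j) l + r * b (.inr i) l) (fun j => s * a i j),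
    Sum.elim w (fun j => u (.inl j)), fun i => u (.inr i), fun i => ?_, ?_⟩
  · have hy := fun j => hyz (.inl j)
    have hz := hyz (.inr i)
    simp only [Sum.elim_inl, Sum.elim_inr] at hy hz
    rw [hx i, hz, Fintype.sum_sum_type]
    simp only [Sum.elim_inl, Sum.elim_inr, hy, smul_add, Finset.smul_sum, smul_smul, add_smul,
      Finset.sum_smul, Finset.sum_add_distrib, mul_comm s]
    rw [Finset.sum_comm]
    abel
  · rintro (l | j)
    · obtain ⟨d, hd⟩ := hgf l
      rw [Fintype.sum_sum_type] at hd
      refine ⟨d, ?_⟩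
      simp only [Sum.elim_inl, Sum.elim_inr] at hd ⊢
      calc ∑ i, f i * (∑ j, a i j * b (.inl j) l + r * b (.inr i) l)
          = ∑ j, (∑ i, f i * a i j) * b (.inl j) l + r * ∑ i, f i * b (.inr i) l := by
            simp only [mul_add, Finset.sum_add_distrib, Finset.mul_sum, Finset.sum_mul,
              mul_assoc, mul_left_comm r]
            rw [Finset.sum_comm]
        _ = r * (s * d) := by simp only [hfa, mul_assoc, ← Finset.mul_sum, ← mul_add, hd]
        _ = r * s * d := (mul_assoc r s d).symm
    · exact ⟨g j, by simp only [Sum.elim_inr, mul_left_comm _ s, ← Finset.mul_sum, hfa]; ring⟩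

theorem isTrivialRelationModulo_of_flat_quotient (t : A)
    [Flat (A ⧸ Ideal.span {t}) (M ⧸ (Ideal.span {t} • ⊤ : Submodule A M))] {w : M}
    (hw : ∑ i, f i • x i = t • w) : IsTrivialRelationModulo t f x := by
  set N : Submodule A M := Ideal.span {t} • ⊤
  have hmk : ∀ (c : A) (v : M), Ideal.Quotient.mk (Ideal.span {t}) c • N.mkQ v = N.mkQ (c • v) :=
    fun _ _ => rfl
  have hmem : ∀ v : M, v ∈ N ↔ ∃ u, v = t • u := by
    simp [N, Submodule.ideal_span_singleton_smul, Submodule.mem_smul_pointwise_iff_exists, eq_comm]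
  obtain ⟨k, a₀, y₀, hxa₀, hfa₀⟩ := Flat.isTrivialRelation_of_sum_smul_eq_zero
    (f := fun i => Ideal.Quotient.mk (Ideal.span {t}) (f i)) (x := fun i => N.mkQ (x i)) <| by
      simp only [hmk, ← map_sum, hw]
      exact (Submodule.Quotient.mk_eq_zero N).mpr ((hmem _).mpr ⟨w, rfl⟩)
  choose a ha using fun i j => Ideal.Quotient.mk_surjective (a₀ i j)
  choose y hy using fun j => N.mkQ_surjective (y₀ j)
  have hz : ∀ i, ∃ u, x i - ∑ j, a i j • y j = t • u := fun i => (hmem _).mp <| by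
    rw [← Submodule.Quotient.mk_eq_zero, ← N.mkQ_apply, map_sub, map_sum, sub_eq_zero]
    simpa only [← hmk, ha, hy] using hxa₀ i
  choose z hz using hz
  refine ⟨Fin k, inferInstance, a, y, z, fun i => by rw [← hz i, add_sub_cancel], fun j => ?_⟩
  rw [← Ideal.mem_span_singleton, ← Ideal.Quotient.eq_zero_iff_mem, map_sum]
  simpa only [map_mul, ha] using hfa₀ j

theorem isTrivialRelationModulo_pow {t : A} {m : ℕ}
    (hker : ∀ k < m, ∀ v : M, t ^ k • v = 0 → ∃ u, v = t • u)
    [Flat (A ⧸ Ideal.span {t}) (M ⧸ (Ideal.span {t} • ⊤ : Submodule A M))] :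
    ∀ k ≤ m, ∀ {ι : Type} [Fintype ι] {f : ι → A} {x : ι → M} {w : M},
      ∑ i, f i • x i = t ^ k • w → IsTrivialRelationModulo (t ^ k) f x
  | 0, _, _, _, _, _, _, _ => by simpa only [pow_zero] using isTrivialRelationModulo_one
  | k + 1, hk, ι, _, f, x, w, hw => by
    obtain ⟨κ, _, a, y, z, hx, hfa⟩ := isTrivialRelationModulo_pow hker k (by omega)
      (w := t • w) (by rw [hw, pow_succ, mul_smul])
    choose g hg using hfa
    obtain ⟨v, hv⟩ := hker k (by omega) (∑ j, g j • y j + ∑ i, f i • z i - t • w) <| by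
      rw [smul_sub, ← sum_smul_eq_smul_sum_add_sum hx hg, hw, pow_succ, mul_smul, sub_self]
    rw [pow_succ]
    refine isTrivialRelationModulo_mul hx hg (isTrivialRelationModulo_of_flat_quotient t
      (w := v + w) ?_)
    rw [Fintype.sum_sum_type, smul_add, ← hv, sub_add_cancel]
    rfl

theorem Flat.of_flat_quotient_of_pow_eq_zero {t : A} {m : ℕ} (htm : t ^ m = 0)
    (hker : ∀ k < m, ∀ v : M, t ^ k • v = 0 → ∃ u, v = t • u)
    [Flat (A ⧸ Ideal.span {t}) (M ⧸ (Ideal.span {t} • ⊤ : Submodule A M))] : Flat A M := by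
  refine Flat.of_forall_isTrivialRelation fun {l f x} hfx => ?_
  have h := isTrivialRelationModulo_pow hker m le_rfl (f := f) (x := x) (w := 0)
    (by rw [hfx, smul_zero])
  rw [htm] at h
  exact h.isTrivialRelation

theorem Flat.exists_eq_smul_of_smul_eq_zero [Flat A M] {r s : A} (hrs : ∀ c, r * c = 0 → s ∣ c)
    {v : M} (hv : r • v = 0) : ∃ u, v = s • u := by
  obtain ⟨k, a, y, hvy, hra⟩ := Flat.isTrivialRelation_of_sum_smul_eq_zero
    (f := fun _ : Unit => r) (x := fun _ => v) (by simpa using hv)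
  choose c hc using fun j => hrs (a () j) (by simpa using hra j)
  exact ⟨∑ j, c j • y j, by simp only [hvy (), hc, mul_smul, Finset.smul_sum]⟩

end Module

theorem Ideal.Quotient.mk_dvd_of_pow_mul_eq_zero {O : Type*} [CommRing O] [IsDomain O] {π : O}
    (hπ : π ≠ 0) {m k : ℕ} (hkm : k < m) {c : O ⧸ Ideal.span {π ^ m}}
    (hc : Ideal.Quotient.mk _ π ^ k * c = 0) : Ideal.Quotient.mk _ π ∣ c := by
  obtain ⟨γ, rfl⟩ := Ideal.Quotient.mk_surjective c
  rw [← map_pow, ← map_mul, Ideal.Quotient.eq_zero_iff_mem, Ideal.mem_span_singleton,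
    ← Nat.add_sub_cancel' hkm.le, pow_add, mul_dvd_mul_iff_left (pow_ne_zero k hπ)] at hc
  exact map_dvd _ ((dvd_pow_self π (Nat.sub_ne_zero_of_lt hkm)).trans hc)

theorem flat_of_finite_of_flat_mod_pi_general
    (O : Type*) [CommRing O] [IsDomain O]
    (π : O) (hπ : Irreducible π) (m : ℕ)
    (A : Type*) [CommRing A] [Algebra (O ⧸ Ideal.span {π ^ m}) A]
    (B : Type*) [CommRing B] [Algebra A B]
    [Algebra (O ⧸ Ideal.span {π ^ m}) B]
    [IsScalarTower (O ⧸ Ideal.span {π ^ m}) A B]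
    [Module.Flat (O ⧸ Ideal.span {π ^ m}) B]
    (hbar : Module.Flat
      (A ⧸ Ideal.span {algebraMap (O ⧸ Ideal.span {π ^ m}) A
          (Ideal.Quotient.mk (Ideal.span {π ^ m}) π)})
      (B ⧸ (Ideal.span {algebraMap (O ⧸ Ideal.span {π ^ m}) A
          (Ideal.Quotient.mk (Ideal.span {π ^ m}) π)} • ⊤ : Submodule A B))) :
    Module.Flat A B := by
  set p : O ⧸ Ideal.span {π ^ m} := Ideal.Quotient.mk _ π
  have hpm : p ^ m = 0 := by
    rw [← map_pow, Ideal.Quotient.eq_zero_iff_mem]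
    exact Ideal.mem_span_singleton_self _
  refine Module.Flat.of_flat_quotient_of_pow_eq_zero (t := algebraMap _ A p) (m := m)
    (by rw [← map_pow, hpm, map_zero])
    fun k hk v hv => ?_
  rw [← map_pow, algebraMap_smul] at hv
  obtain ⟨u, rfl⟩ := Module.Flat.exists_eq_smul_of_smul_eq_zero
    (fun _ => Ideal.Quotient.mk_dvd_of_pow_mul_eq_zero hπ.ne_zero hk) hv
  exact ⟨u, (algebraMap_smul A p u).symm⟩

/-- **Claim in the proof of Theorem 2.1 (ring-theoretic form).**
Let `O` be a discrete valuation ring with uniformizer `π` and `m ≥ 1`. Let `A` be a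
commutative `O/(π^m)`-algebra, flat as an `O/(π^m)`-module, and `B` a commutative
`A`-algebra, finitely generated as an `A`-module and flat as an `O/(π^m)`-module.
If `B/πB` is flat over `A/πA`, then `B` is flat over `A`. -/
theorem flat_of_finite_of_flat_mod_pi
    (O : Type*) [CommRing O] [IsDomain O] [IsDiscreteValuationRing O]
    (π : O) (hπ : Irreducible π) (m : ℕ) (hm : 1 ≤ m)
    (A : Type*) [CommRing A] [Algebra (O ⧸ Ideal.span {π ^ m}) A]
    [Module.Flat (O ⧸ Ideal.span {π ^ m}) A]
    (B : Type*) [CommRing B] [Algebra A B] [Module.Finite A B]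
    [Algebra (O ⧸ Ideal.span {π ^ m}) B]
    [IsScalarTower (O ⧸ Ideal.span {π ^ m}) A B]
    [Module.Flat (O ⧸ Ideal.span {π ^ m}) B]
    (hbar : Module.Flat
      (A ⧸ Ideal.span {algebraMap (O ⧸ Ideal.span {π ^ m}) A
          (Ideal.Quotient.mk (Ideal.span {π ^ m}) π)})
      (B ⧸ (Ideal.span {algebraMap (O ⧸ Ideal.span {π ^ m}) A
          (Ideal.Quotient.mk (Ideal.span {π ^ m}) π)} • ⊤ : Submodule A B))) :
    Module.Flat A B :=
  flat_of_finite_of_flat_mod_pi_general O π hπ m A B hbar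
end

section
/- Let α, β be real numbers with 0 < α < β, and let c : ℤ → ℝ_{≥0} be a function such that c(n)·α^n → 0 as n → -∞ and c(n)·β^n → 0 as n → +∞. Set M := max( sup_{n ≤ 0} c(n)·α^n , sup_{n ≥ 0} c(n)·β^n ), assume M > 0, and assume that the set A := { n ≤ 0 : c(n)·α^n = M } is nonempty; let n₀ be the maximal element of A (A is finite by the decay hypotheses). Then there exist real numbers α', β' with α < α' < β' ≤ β such that for every integer n ≠ n₀ and every ρ ∈ [α', β'] one has c(n)·ρ^n < c(n₀)·ρ^{n₀}. (This is the Claim in the proof of Lemma 1.7, applied to the coefficient norms c(n) = |a_n| of a function a = Σ_n a_n t^n on a relative annulus of radii [α, β].) -/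
/-!
Write `ρ = α · (ρ / α)` and `ρ = β · (ρ / β)`. For `n < n₀` the bound `c n α ^ n ≤ M` and
`ρ / α > 1` make `c n ρ ^ n ≤ M (ρ / α) ^ n` strictly smaller than `c n₀ ρ ^ n₀ = M (ρ / α) ^ n₀`.
For `n > 0` the bound `c n β ^ n ≤ M` gives `c n ρ ^ n ≤ M ρ / β`, which at `ρ = α` is below `M`.
The finitely many `n₀ < n ≤ 0` satisfy `c n α ^ n < M` by maximality of `n₀`. All the remaining
strict inequalities hold at `ρ = α` and are open conditions in `ρ`, so they persist on some
interval `(α, β']`.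
-/

open Filter Topology Set

section Bounded

variable {X : Type*} [Preorder X] [TopologicalSpace X] [BoundedLENhdsClass X] [IsDirectedOrder X]
  {f : ℤ → X} {a : X}

theorem Filter.Tendsto.bddAbove_range_nonneg (hf : Tendsto f atTop (𝓝 a)) :
    BddAbove (range fun n : {n : ℤ // 0 ≤ n} => f n) := by
  obtain ⟨b, hb⟩ := (hf.comp tendsto_natCast_atTop_atTop).bddAbove_range
  refine ⟨b, ?_⟩
  rintro _ ⟨⟨n, hn⟩, rfl⟩
  lift n to ℕ using hn
  exact hb ⟨n, rfl⟩

theorem Filter.Tendsto.bddAbove_range_nonpos (hf : Tendsto f atBot (𝓝 a)) :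
    BddAbove (range fun n : {n : ℤ // n ≤ 0} => f n) := by
  obtain ⟨b, hb⟩ := (hf.comp tendsto_neg_atTop_atBot).bddAbove_range_nonneg
  refine ⟨b, ?_⟩
  rintro _ ⟨⟨n, hn⟩, rfl⟩
  simpa using hb ⟨⟨-n, by omega⟩, rfl⟩

end Bounded

section Monomial

variable {b b₀ a ρ M : ℝ} {n n₀ : ℤ}

theorem mul_zpow_eq_mul_zpow_mul_div_zpow {K : Type*} [Field K] {a : K} (ha : a ≠ 0) (b ρ : K)
    (n : ℤ) : b * ρ ^ n = b * a ^ n * (ρ / a) ^ n := by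
  rw [div_zpow, mul_assoc, mul_div_cancel₀ _ (zpow_ne_zero n ha)]

theorem mul_zpow_lt_mul_zpow_of_lt (ha : 0 < a) (haρ : a < ρ) (hM : 0 < M) (hb : b * a ^ n ≤ M)
    (hb₀ : b₀ * a ^ n₀ = M) (hn : n < n₀) : b * ρ ^ n < b₀ * ρ ^ n₀ := by
  have hρa : 1 < ρ / a := (one_lt_div ha).2 haρ
  calc b * ρ ^ n = b * a ^ n * (ρ / a) ^ n := mul_zpow_eq_mul_zpow_mul_div_zpow ha.ne' _ _ _
    _ ≤ M * (ρ / a) ^ n := mul_le_mul_of_nonneg_right hb (zpow_nonneg (by linarith) n)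
    _ < M * (ρ / a) ^ n₀ := by gcongr
    _ = b₀ * ρ ^ n₀ := by rw [mul_zpow_eq_mul_zpow_mul_div_zpow ha.ne' b₀, hb₀]

theorem mul_zpow_le_mul_div_of_pos (hρ : 0 < ρ) (hρa : ρ ≤ a) (hM : 0 ≤ M)
    (hb : b * a ^ n ≤ M) (hn : 0 < n) : b * ρ ^ n ≤ M * (ρ / a) := by
  have ha : 0 < a := hρ.trans_le hρa
  have hρa₀ : 0 < ρ / a := div_pos hρ ha
  calc b * ρ ^ n = b * a ^ n * (ρ / a) ^ n := mul_zpow_eq_mul_zpow_mul_div_zpow ha.ne' _ _ _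
    _ ≤ M * (ρ / a) ^ n := mul_le_mul_of_nonneg_right hb (zpow_nonneg hρa₀.le n)
    _ ≤ M * (ρ / a) ^ (1 : ℤ) :=
      mul_le_mul_of_nonneg_left (zpow_le_zpow_right_of_le_one₀ hρa₀ ((div_le_one ha).2 hρa) hn) hM
    _ = M * (ρ / a) := by rw [zpow_one]

end Monomial

theorem dominant_monomial_claim_general
    (α β : ℝ) (hα : 0 < α) (hαβ : α < β)
    (c : ℤ → ℝ)
    (hbot : Tendsto (fun n : ℤ => c n * α ^ n) atBot (nhds 0))
    (htop : Tendsto (fun n : ℤ => c n * β ^ n) atTop (nhds 0))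
    (M : ℝ)
    (hM : M = max (⨆ n : {n : ℤ // n ≤ 0}, c n * α ^ (n : ℤ))
                  (⨆ n : {n : ℤ // 0 ≤ n}, c n * β ^ (n : ℤ)))
    (hMpos : 0 < M)
    (n₀ : ℤ) (hn₀le : n₀ ≤ 0) (hn₀M : c n₀ * α ^ n₀ = M)
    (hn₀max : ∀ n : ℤ, n ≤ 0 → c n * α ^ n = M → n ≤ n₀) :
    ∃ α' β' : ℝ, α < α' ∧ α' < β' ∧ β' ≤ β ∧
      ∀ n : ℤ, n ≠ n₀ → ∀ ρ ∈ Set.Icc α' β', c n * ρ ^ n < c n₀ * ρ ^ n₀ := by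
  have hA : ∀ n ≤ 0, c n * α ^ n ≤ M := fun n hn =>
    hM ▸ (le_ciSup hbot.bddAbove_range_nonpos ⟨n, hn⟩).trans (le_max_left _ _)
  have hB : ∀ n ≥ 0, c n * β ^ n ≤ M := fun n hn =>
    hM ▸ (le_ciSup htop.bddAbove_range_nonneg ⟨n, hn⟩).trans (le_max_right _ _)
  have hcont : ∀ n, ContinuousAt (fun ρ : ℝ => c n * ρ ^ n) α := fun n =>
    (continuousAt_zpow₀ α n (.inl hα.ne')).const_mul (c n)
  have hnear : ∀ᶠ ρ in 𝓝 α, ρ < β ∧ M * (ρ / β) < c n₀ * ρ ^ n₀ ∧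
      ∀ n ∈ Finset.Ioc n₀ 0, c n * ρ ^ n < c n₀ * ρ ^ n₀ := by
    refine (continuousAt_id.eventually_lt continuousAt_const hαβ).and <|
      ((continuousAt_id.div_const β).const_mul M |>.eventually_lt (hcont n₀) ?_).and <|
        (eventually_all_finset _).2 fun n hn => (hcont n).eventually_lt (hcont n₀) ?_
    · simpa [hn₀M] using mul_lt_of_lt_one_right hMpos ((div_lt_one (hα.trans hαβ)).2 hαβ)
    · obtain ⟨hn₀n, hn0⟩ := Finset.mem_Ioc.1 hn
      exact hn₀M ▸ (hA n hn0).lt_of_ne fun h => (hn₀max n hn0 h).not_gt hn₀n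
  obtain ⟨β', hαβ', hsub⟩ := mem_nhdsGT_iff_exists_Ioc_subset.1 (mem_nhdsWithin_of_mem_nhds hnear)
  refine ⟨(α + β') / 2, β', by linarith [mem_Ioi.1 hαβ'], by linarith [mem_Ioi.1 hαβ'],
    (hsub ⟨hαβ', le_rfl⟩).1.le, fun n hn ρ hρ => ?_⟩
  have hαρ : α < ρ := by linarith [mem_Ioi.1 hαβ', hρ.1]
  obtain ⟨hρβ, hhigh, hmid⟩ := hsub ⟨hαρ, hρ.2⟩
  rcases hn.lt_or_gt with hlt | hgt
  · exact mul_zpow_lt_mul_zpow_of_lt hα hαρ hMpos (hA n (by omega)) hn₀M hlt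
  · by_cases hn0 : 0 < n
    · exact (mul_zpow_le_mul_div_of_pos (hα.trans hαρ) hρβ.le hMpos.le (hB n hn0.le) hn0).trans_lt
        hhigh
    · exact hmid n (Finset.mem_Ioc.2 ⟨hgt, by omega⟩)

/-- **Claim in the proof of Lemma 1.7.**
Let `0 < α < β` and let `c : ℤ → ℝ≥0` satisfy `c n * α ^ n → 0` as `n → -∞` and
`c n * β ^ n → 0` as `n → +∞`. Let `M = max (sup_{n ≤ 0} c n * α ^ n) (sup_{n ≥ 0} c n * β ^ n)`,
assume `M > 0`, and let `n₀` be the maximal element of the (nonempty) set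
`A = {n ≤ 0 | c n * α ^ n = M}`. Then there exist `α', β'` with `α < α' < β' ≤ β` such that
`c n * ρ ^ n < c n₀ * ρ ^ n₀` for all `n ≠ n₀` and all `ρ ∈ [α', β']`. -/
theorem dominant_monomial_claim
    (α β : ℝ) (hα : 0 < α) (hαβ : α < β)
    (c : ℤ → ℝ) (hc : ∀ n, 0 ≤ c n)
    (hbot : Tendsto (fun n : ℤ => c n * α ^ n) atBot (nhds 0))
    (htop : Tendsto (fun n : ℤ => c n * β ^ n) atTop (nhds 0))
    (M : ℝ)
    (hM : M = max (⨆ n : {n : ℤ // n ≤ 0}, c n * α ^ (n : ℤ))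
                  (⨆ n : {n : ℤ // 0 ≤ n}, c n * β ^ (n : ℤ)))
    (hMpos : 0 < M)
    (n₀ : ℤ) (hn₀le : n₀ ≤ 0) (hn₀M : c n₀ * α ^ n₀ = M)
    (hn₀max : ∀ n : ℤ, n ≤ 0 → c n * α ^ n = M → n ≤ n₀) :
    ∃ α' β' : ℝ, α < α' ∧ α' < β' ∧ β' ≤ β ∧
      ∀ n : ℤ, n ≠ n₀ → ∀ ρ ∈ Set.Icc α' β', c n * ρ ^ n < c n₀ * ρ ^ n₀ :=
  dominant_monomial_claim_general α β hα hαβ c hbot htop M hM hMpos n₀ hn₀le hn₀M hn₀max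
end

section
/- Let α, β be real numbers with 0 < α < β, and let c : ℤ → ℝ_{≥0} be a function such that c(n)·α^n → 0 as n → -∞ and c(n)·β^n → 0 as n → +∞. Set M := max( sup_{n ≤ 0} c(n)·α^n , sup_{n ≥ 0} c(n)·β^n ) and assume M > 0. Then there exist an integer n₀ and real numbers α', β' with α ≤ α' < β' ≤ β such that for every ρ ∈ [α', β']: (i) c(n)·ρ^n < c(n₀)·ρ^{n₀} for every integer n ≠ n₀, and (ii) sup_{n ∈ ℤ} c(n)·ρ^n = c(n₀)·ρ^{n₀} > 0. (This is the quantitative core of Lemma 1.7: on a subannulus of positive width the ρ-Gauss norm of a nonzero function a = Σ a_n t^n is attained by a single dominant monomial a_{n₀} t^{n₀}.) -/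
open Filter

private lemma zpow_base_le_aux {a b : ℝ} (ha : 0 < a) (hab : a ≤ b) {n : ℤ} (hn : 0 ≤ n) :
    a ^ n ≤ b ^ n := by
  lift n to ℕ using hn
  rw [zpow_natCast, zpow_natCast]
  exact pow_le_pow_left₀ ha.le hab n

private lemma zpow_base_le_aux' {a b : ℝ} (ha : 0 < a) (hab : a ≤ b) {n : ℤ} (hn : n ≤ 0) :
    b ^ n ≤ a ^ n := by
  have h1 : a ^ (-n) ≤ b ^ (-n) := zpow_base_le_aux ha hab (neg_nonneg.mpr hn)
  calc b ^ n = (b ^ (-n))⁻¹ := by rw [← zpow_neg, neg_neg]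
    _ ≤ (a ^ (-n))⁻¹ := inv_anti₀ (zpow_pos ha _) h1
    _ = a ^ n := by rw [← zpow_neg, neg_neg]

/-- **Quantitative core of Lemma 1.7.**
Let `0 < α < β` and let `c : ℤ → ℝ≥0` satisfy `c n * α ^ n → 0` as `n → -∞` and
`c n * β ^ n → 0` as `n → +∞`. Let
`M = max (sup_{n ≤ 0} c n * α ^ n) (sup_{n ≥ 0} c n * β ^ n)` and assume `M > 0`.
Then there exist an integer `n₀` and `α', β'` with `α ≤ α' < β' ≤ β` such that for every
`ρ ∈ [α', β']`: (i) `c n * ρ ^ n < c n₀ * ρ ^ n₀` for every `n ≠ n₀`, and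
(ii) `sup_n c n * ρ ^ n = c n₀ * ρ ^ n₀ > 0`. -/
theorem dominant_monomial_exists
    (α β : ℝ) (hα : 0 < α) (hαβ : α < β)
    (c : ℤ → ℝ) (hc : ∀ n, 0 ≤ c n)
    (hbot : Tendsto (fun n : ℤ => c n * α ^ n) atBot (nhds 0))
    (htop : Tendsto (fun n : ℤ => c n * β ^ n) atTop (nhds 0))
    (M : ℝ)
    (hM : M = max (⨆ n : {n : ℤ // n ≤ 0}, c n * α ^ (n : ℤ))
                  (⨆ n : {n : ℤ // 0 ≤ n}, c n * β ^ (n : ℤ)))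
    (hMpos : 0 < M) :
    ∃ (n₀ : ℤ) (α' β' : ℝ), α ≤ α' ∧ α' < β' ∧ β' ≤ β ∧
      ∀ ρ ∈ Set.Icc α' β',
        (∀ n : ℤ, n ≠ n₀ → c n * ρ ^ n < c n₀ * ρ ^ n₀) ∧
        (⨆ n : ℤ, c n * ρ ^ n) = c n₀ * ρ ^ n₀ ∧
        0 < c n₀ * ρ ^ n₀ := by
  have hβ : 0 < β := hα.trans hαβ
  -- there is a nonzero coefficient
  obtain ⟨n₁, hn₁⟩ : ∃ n, 0 < c n := by
    by_contra h
    push_neg at h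
    have hzero : ∀ n : ℤ, c n = 0 := fun n => le_antisymm (h n) (hc n)
    haveI : Nonempty {n : ℤ // n ≤ 0} := ⟨⟨0, le_refl 0⟩⟩
    haveI : Nonempty {n : ℤ // 0 ≤ n} := ⟨⟨0, le_refl 0⟩⟩
    have h1 : (⨆ n : {n : ℤ // n ≤ 0}, c n * α ^ (n : ℤ)) = 0 := by
      simp [hzero]
    have h2 : (⨆ n : {n : ℤ // 0 ≤ n}, c n * β ^ (n : ℤ)) = 0 := by
      simp [hzero]
    rw [hM, h1, h2, max_self] at hMpos
    exact lt_irrefl 0 hMpos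
  set γ : ℝ := (α + β) / 2 with hγdef
  have hαγ : α < γ := by simp only [hγdef]; linarith
  have hγβ : γ < β := by simp only [hγdef]; linarith
  have hγ : 0 < γ := hα.trans hαγ
  set ε : ℝ := c n₁ * γ ^ n₁ with hεdef
  have hε : 0 < ε := mul_pos hn₁ (zpow_pos hγ _)
  obtain ⟨Nt, hNt⟩ := eventually_atTop.mp (htop.eventually_lt_const (half_pos hε))
  obtain ⟨Nb, hNb⟩ := eventually_atBot.mp (hbot.eventually_lt_const (half_pos hε))
  set A : ℤ := min (min Nb 0) n₁ with hA
  set B : ℤ := max (max Nt 0) n₁ with hB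
  set W : Finset ℤ := Finset.Icc A B with hW
  have hn₁W : n₁ ∈ W := by simp only [hW, Finset.mem_Icc]; omega
  have hWne : W.Nonempty := ⟨n₁, hn₁W⟩
  set g : ℤ → ℝ := fun n => c n * γ ^ n with hg
  set t : ℝ := W.sup' hWne g with htdef
  have ht_ge : ε ≤ t := Finset.le_sup' g hn₁W
  have htpos : 0 < t := lt_of_lt_of_le hε ht_ge
  -- the set of maximizers
  set Wmax : Finset ℤ := W.filter (fun n => g n = t) with hWmax
  have hWmaxne : Wmax.Nonempty := by
    obtain ⟨b, hbW, hbe⟩ := Finset.exists_mem_eq_sup' hWne g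
    exact ⟨b, Finset.mem_filter.mpr ⟨hbW, hbe.symm⟩⟩
  set n₀ : ℤ := Wmax.max' hWmaxne with hn₀def
  have hn₀mem : n₀ ∈ Wmax := Wmax.max'_mem hWmaxne
  have hn₀W : n₀ ∈ W := (Finset.mem_filter.mp hn₀mem).1
  have hg₀ : g n₀ = t := (Finset.mem_filter.mp hn₀mem).2
  -- uniform outside bounds
  have hout_top : ∀ n : ℤ, B < n → ∀ ρ : ℝ, 0 < ρ → ρ ≤ β → c n * ρ ^ n < ε / 2 := by
    intro n hn ρ hρ hρβ
    have h0n : (0:ℤ) ≤ n := by omega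
    calc c n * ρ ^ n ≤ c n * β ^ n :=
          mul_le_mul_of_nonneg_left (zpow_base_le_aux hρ hρβ h0n) (hc n)
      _ < ε / 2 := hNt n (by omega)
  have hout_bot : ∀ n : ℤ, n < A → ∀ ρ : ℝ, α ≤ ρ → c n * ρ ^ n < ε / 2 := by
    intro n hn ρ hρα
    have h0n : n ≤ (0:ℤ) := by omega
    calc c n * ρ ^ n ≤ c n * α ^ n :=
          mul_le_mul_of_nonneg_left (zpow_base_le_aux' hα hρα h0n) (hc n)
      _ < ε / 2 := hNb n (by omega)
  have hub_γ : ∀ n : ℤ, g n ≤ t := by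
    intro n
    by_cases hnW : n ∈ W
    · exact Finset.le_sup' g hnW
    · simp only [hW, Finset.mem_Icc, not_and_or, not_le] at hnW
      rcases hnW with h | h
      · exact le_of_lt ((hout_bot n h γ hαγ.le).trans (by linarith))
      · exact le_of_lt ((hout_top n h γ hγ hγβ.le).trans (by linarith))
  have hc₀ : 0 < c n₀ := by
    rcases (hc n₀).lt_or_eq with h | h
    · exact h
    · exfalso
      have : g n₀ = 0 := by simp [hg, ← h]
      rw [hg₀] at this
      linarith
  -- continuity: eventually near γ the dominant term wins among window terms
  have hcont : ∀ n : ℤ, ContinuousAt (fun ρ : ℝ => c n * ρ ^ n) γ := fun n =>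
    continuousAt_const.mul (continuousAt_zpow₀ γ n (Or.inl hγ.ne'))
  have ev1 : ∀ᶠ ρ in nhds γ, ∀ n ∈ W, g n < t → c n * ρ ^ n < c n₀ * ρ ^ n₀ := by
    rw [Finset.eventually_all]
    intro n hnW
    by_cases h : g n < t
    · have hlt : c n * γ ^ n < c n₀ * γ ^ n₀ := by
        rw [show c n₀ * γ ^ n₀ = t from hg₀]; exact h
      filter_upwards [(hcont n).eventually_lt (hcont n₀) hlt] with ρ hρ _
      exact hρ
    · filter_upwards with ρ hcontra
      exact absurd hcontra h
  have ev2 : ∀ᶠ ρ in nhds γ, ε / 2 < c n₀ * ρ ^ n₀ := by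
    have : (ε / 2 : ℝ) < c n₀ * γ ^ n₀ := by
      rw [show c n₀ * γ ^ n₀ = t from hg₀]; linarith
    exact (Filter.Tendsto.eventually_lt tendsto_const_nhds (hcont n₀) this)
  obtain ⟨δ, hδpos, hδP⟩ := Metric.eventually_nhds_iff.mp (ev1.and ev2)
  -- choose the subinterval
  set d : ℝ := min (δ / 2) ((β - γ) / 2) with hd
  have hdpos : 0 < d := lt_min (half_pos hδpos) (by simp only [hγdef]; linarith)
  refine ⟨n₀, γ + d / 2, γ + d, by linarith, by linarith, ?_, ?_⟩
  · have : d ≤ (β - γ) / 2 := min_le_right _ _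
    linarith
  intro ρ hρ
  obtain ⟨hρl, hρr⟩ := hρ
  have hγρ : γ < ρ := by linarith
  have hρβ : ρ ≤ β := by
    have : d ≤ (β - γ) / 2 := min_le_right _ _
    linarith
  have hρpos : 0 < ρ := hγ.trans hγρ
  have hdist : dist ρ γ < δ := by
    rw [Real.dist_eq, abs_of_pos (by linarith : (0:ℝ) < ρ - γ)]
    have : d ≤ δ / 2 := min_le_left _ _
    linarith
  obtain ⟨Hfin, Hn₀⟩ := hδP hdist
  have hone : 1 < ρ / γ := (one_lt_div hγ).mpr hγρ
  have key : ∀ m : ℤ, c m * ρ ^ m = (c m * γ ^ m) * (ρ / γ) ^ m := by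
    intro m
    rw [mul_assoc, ← mul_zpow, mul_div_cancel₀ ρ hγ.ne']
  have hmain : ∀ n : ℤ, n ≠ n₀ → c n * ρ ^ n < c n₀ * ρ ^ n₀ := by
    intro n hne
    by_cases hnW : n ∈ W
    · by_cases h : g n < t
      · exact Hfin n hnW h
      · have heq : g n = t := le_antisymm (hub_γ n) (not_lt.mp h)
        have hnle : n ≤ n₀ := Wmax.le_max' n (Finset.mem_filter.mpr ⟨hnW, heq⟩)
        have hnlt : n < n₀ := lt_of_le_of_ne hnle hne
        rw [key n, key n₀]
        rw [show c n * γ ^ n = t from heq, show c n₀ * γ ^ n₀ = t from hg₀]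
        exact mul_lt_mul_of_pos_left (zpow_lt_zpow_right₀ hone hnlt) htpos
    · simp only [hW, Finset.mem_Icc, not_and_or, not_le] at hnW
      rcases hnW with h | h
      · exact (hout_bot n h ρ (by linarith)).trans Hn₀
      · exact (hout_top n h ρ hρpos hρβ).trans Hn₀
  have hub : ∀ n : ℤ, c n * ρ ^ n ≤ c n₀ * ρ ^ n₀ := by
    intro n
    by_cases hne : n = n₀
    · rw [hne]
    · exact (hmain n hne).le
  refine ⟨hmain, ?_, lt_trans (half_pos hε) Hn₀⟩
  have hbdd : BddAbove (Set.range fun n : ℤ => c n * ρ ^ n) := by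
    refine ⟨c n₀ * ρ ^ n₀, ?_⟩
    rintro x ⟨n, rfl⟩
    exact hub n
  exact le_antisymm (ciSup_le hub) (le_ciSup hbdd n₀)
end

section
/- Let N ≥ 1 be a natural number, let η be a real number with 0 < η < 1, and let c : ℕ^N → ℝ_{≥0} be a function satisfying c(0) = 1 and the axis-submultiplicativity c(j) ≤ ∏_{l=1}^N c(j_l · e_l) for every multi-index j = (j_1, …, j_N) ∈ ℕ^N, where e_l denotes the l-th standard basis vector of ℕ^N. Then the following are equivalent: (1) c(j)·η^{|j|} → 0 as |j| := j_1 + ⋯ + j_N → ∞; (2) for each i ∈ {1, …, N}, c(s·e_i)·η^s → 0 as s → ∞. (This is the equivalence of conditions (3) and (4) established in the proof of Proposition 1.5, with c(j) the operator norm of (1/j!)∂^j; the nontrivial direction uses that any j has an index i with j_i ≥ |j|/N.) -/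
open Filter

/-- **Equivalence of conditions (3) and (4) in the proof of Proposition 1.5.**
Let `N ≥ 1`, `0 < η < 1`, and `c : ℕ^N → ℝ≥0` with `c 0 = 1` and
`c j ≤ ∏_l c (j_l • e_l)` for every multi-index `j`. Then `c j * η ^ |j| → 0` as
`|j| → ∞` if and only if for each coordinate direction `i`, `c (s • e_i) * η ^ s → 0`
as `s → ∞`. -/
theorem axis_decay_iff_multi_decay
    (N : ℕ) (hN : 1 ≤ N) (η : ℝ) (hη0 : 0 < η) (hη1 : η < 1)
    (c : (Fin N → ℕ) → ℝ) (hc0 : ∀ j, 0 ≤ c j) (hone : c 0 = 1)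
    (hsub : ∀ j : Fin N → ℕ, c j ≤ ∏ l : Fin N, c (Pi.single l (j l))) :
    (∀ ε : ℝ, 0 < ε → ∃ S : ℕ, ∀ j : Fin N → ℕ, S ≤ ∑ l, j l →
        c j * η ^ (∑ l, j l) < ε) ↔
    (∀ i : Fin N,
        Tendsto (fun s : ℕ => c (Pi.single i s) * η ^ s) atTop (nhds 0)) := by
  have hNe : Nonempty (Fin N) := ⟨⟨0, hN⟩⟩
  constructor
  · intro h i
    rw [Metric.tendsto_atTop]
    intro ε hε
    obtain ⟨S, hS⟩ := h ε hε
    refine ⟨S, fun s hs => ?_⟩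
    have hsum : ∑ l, Pi.single i s l = s := by simp
    have := hS (Pi.single i s) (by rw [hsum]; exact hs)
    rw [hsum] at this
    rw [Real.dist_eq, sub_zero, abs_of_nonneg (mul_nonneg (hc0 _) (pow_nonneg hη0.le _))]
    exact this
  · intro h ε hε
    -- bound each axis sequence
    have hBl : ∀ l : Fin N, ∃ B : ℝ, ∀ s : ℕ,
        c (Pi.single l s) * η ^ s ≤ B := by
      intro l
      obtain ⟨B, hB⟩ := (h l).bddAbove_range
      exact ⟨B, fun s => hB ⟨s, rfl⟩⟩
    choose Bf hBf using hBl
    set B : ℝ := 1 + ∑ l : Fin N, max (Bf l) 0 with hBdef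
    have hB1 : 1 ≤ B := by
      have : (0:ℝ) ≤ ∑ l : Fin N, max (Bf l) 0 :=
        Finset.sum_nonneg fun l _ => le_max_right _ _
      linarith
    have hB0 : 0 < B := lt_of_lt_of_le one_pos hB1
    have hBb : ∀ (l : Fin N) (s : ℕ), c (Pi.single l s) * η ^ s ≤ B := by
      intro l s
      have h1 : Bf l ≤ max (Bf l) 0 := le_max_left _ _
      have h2 : max (Bf l) 0 ≤ ∑ m : Fin N, max (Bf m) 0 :=
        Finset.single_le_sum (f := fun m => max (Bf m) 0) (fun m _ => le_max_right _ _) (Finset.mem_univ l)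
      have := hBf l s
      linarith
    have hBN : 0 < B ^ N := pow_pos hB0 N
    set ε' : ℝ := ε / B ^ N with hε'def
    have hε' : 0 < ε' := div_pos hε hBN
    -- thresholds
    have hSl : ∀ l : Fin N, ∃ s₀ : ℕ, ∀ s ≥ s₀,
        c (Pi.single l s) * η ^ s < ε' := by
      intro l
      have := (Metric.tendsto_atTop.mp (h l)) ε' hε'
      obtain ⟨s₀, hs₀⟩ := this
      refine ⟨s₀, fun s hs => ?_⟩
      have := hs₀ s hs
      rwa [Real.dist_eq, sub_zero, abs_of_nonneg (mul_nonneg (hc0 _) (pow_nonneg hη0.le _))] at this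
    choose s₀ hs₀ using hSl
    set S₀ : ℕ := Finset.univ.sup s₀ with hS₀def
    refine ⟨N * S₀, fun j hj => ?_⟩
    -- find an index with j i ≥ S₀
    have hex : ∃ i : Fin N, S₀ ≤ j i := by
      by_contra hcon
      push_neg at hcon
      have : ∑ l, j l < ∑ _l : Fin N, S₀ :=
        Finset.sum_lt_sum_of_nonempty Finset.univ_nonempty fun l _ => hcon l
      rw [Finset.sum_const, Finset.card_univ, Fintype.card_fin, smul_eq_mul] at this
      omega
    obtain ⟨i, hi⟩ := hex
    -- main estimate
    have hηpow : ∀ m : ℕ, (0:ℝ) < η ^ m := fun m => pow_pos hη0 m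
    have key : c j * η ^ (∑ l, j l) ≤
        ∏ l : Fin N, (c (Pi.single l (j l)) * η ^ (j l)) := by
      rw [Finset.prod_mul_distrib, Finset.prod_pow_eq_pow_sum]
      exact mul_le_mul_of_nonneg_right (hsub j) (le_of_lt (hηpow _))
    have split : ∏ l : Fin N, (c (Pi.single l (j l)) * η ^ (j l))
        = (c (Pi.single i (j i)) * η ^ (j i)) *
          ∏ l ∈ Finset.univ.erase i, (c (Pi.single l (j l)) * η ^ (j l)) :=
      (Finset.mul_prod_erase Finset.univ _ (Finset.mem_univ i)).symm
    have hrest : ∏ l ∈ Finset.univ.erase i, (c (Pi.single l (j l)) * η ^ (j l))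
        ≤ B ^ N := by
      calc ∏ l ∈ Finset.univ.erase i, (c (Pi.single l (j l)) * η ^ (j l))
          ≤ ∏ _l ∈ Finset.univ.erase i, B :=
            Finset.prod_le_prod (fun l _ => mul_nonneg (hc0 _) (hηpow _).le) (fun l _ => hBb l (j l))
        _ = B ^ (Finset.univ.erase i).card := by rw [Finset.prod_const]
        _ ≤ B ^ N := pow_le_pow_right₀ hB1 (le_trans (Finset.card_le_card
              (Finset.erase_subset _ _)) (by simp))
    have hfi : c (Pi.single i (j i)) * η ^ (j i) < ε' := by
      refine hs₀ i (j i) (le_trans ?_ hi)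
      exact Finset.le_sup (Finset.mem_univ i)
    have hrest0 : 0 ≤ ∏ l ∈ Finset.univ.erase i,
        (c (Pi.single l (j l)) * η ^ (j l)) :=
      Finset.prod_nonneg fun l _ => mul_nonneg (hc0 _) (hηpow _).le
    calc c j * η ^ (∑ l, j l)
        ≤ (c (Pi.single i (j i)) * η ^ (j i)) *
          ∏ l ∈ Finset.univ.erase i, (c (Pi.single l (j l)) * η ^ (j l)) := by
          rw [← split]; exact key
      _ ≤ (c (Pi.single i (j i)) * η ^ (j i)) * B ^ N :=
          mul_le_mul_of_nonneg_left hrest (mul_nonneg (hc0 _) (hηpow _).le)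
      _ < ε' * B ^ N := mul_lt_mul_of_pos_right hfi hBN
      _ = ε := div_mul_cancel₀ ε (ne_of_gt hBN)
end

section
/- Let K be a nontrivially normed field of characteristic zero, let E be a nonzero normed vector space over K, let N ≥ 1, and let D_1, …, D_N be pairwise commuting continuous K-linear endomorphisms of E. Let η be a real number with 0 < η < 1. Then the operator norms ‖(1/j!)·D_1^{j_1} ∘ ⋯ ∘ D_N^{j_N}‖·η^{|j|} tend to 0 as |j| = j_1 + ⋯ + j_N → ∞ (j ranging over ℕ^N) if and only if for each i ∈ {1, …, N} the sequence ‖(1/s!)·D_i^s‖·η^s tends to 0 as s → ∞, where j! := j_1!⋯j_N! and 1/j! denotes scalar multiplication by the inverse of j! in K. (Operator-norm form of the equivalence of conditions (3) and (4) in the proof of Proposition 1.5.) -/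
open Filter

private lemma ofFn_prod_single {M : Type*} [Monoid M] :
    ∀ {n : ℕ} (f : Fin n → M) (i : Fin n), (∀ l, l ≠ i → f l = 1) →
      (List.ofFn f).prod = f i := by
  intro n
  induction n with
  | zero => exact fun f i _ => i.elim0
  | succ n ih =>
    intro f i h
    rw [List.ofFn_succ, List.prod_cons]
    rcases Fin.eq_zero_or_eq_succ i with h0 | ⟨i', rfl⟩
    · subst h0
      have ht : (List.ofFn fun k : Fin n => f k.succ).prod = 1 := by
        apply List.prod_eq_one
        intro x hx
        rw [List.mem_ofFn] at hx
        obtain ⟨k, rfl⟩ := hx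
        exact h _ (Fin.succ_ne_zero k)
      rw [ht, mul_one]
    · rw [h 0 (Ne.symm (Fin.succ_ne_zero i')), one_mul]
      exact ih _ i' fun l hl => h l.succ (fun hc => hl (Fin.succ_injective _ hc))


/-- **Operator-norm form of the equivalence of conditions (3) and (4) in the proof of
Proposition 1.5.** Let `K` be a nontrivially normed field of characteristic zero, `E` a
nonzero normed `K`-vector space, and `D 1, …, D N` pairwise commuting continuous
`K`-linear endomorphisms of `E`. For `0 < η < 1`, the operator norms
`‖(1/j!) • D₁^{j₁} ∘ ⋯ ∘ D_N^{j_N}‖ * η ^ |j|` tend to `0` as `|j| → ∞` if and only if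
for each `i` the sequence `‖(1/s!) • (D i)^s‖ * η ^ s` tends to `0` as `s → ∞`. -/
theorem opNorm_axis_decay_iff_multi_decay
    (K : Type*) [NontriviallyNormedField K] [CharZero K]
    (E : Type*) [NormedAddCommGroup E] [NormedSpace K E] [Nontrivial E]
    (N : ℕ) (hN : 1 ≤ N) (D : Fin N → E →L[K] E)
    (hcomm : ∀ i j : Fin N, Commute (D i) (D j))
    (η : ℝ) (hη0 : 0 < η) (hη1 : η < 1) :
    (∀ ε : ℝ, 0 < ε → ∃ S : ℕ, ∀ j : Fin N → ℕ, S ≤ ∑ l, j l →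
        ‖((∏ l, Nat.factorial (j l) : ℕ) : K)⁻¹ • (List.ofFn fun l => (D l) ^ (j l)).prod‖ *
          η ^ (∑ l, j l) < ε) ↔
    (∀ i : Fin N,
        Tendsto (fun s : ℕ => ‖((Nat.factorial s : ℕ) : K)⁻¹ • (D i) ^ s‖ * η ^ s)
          atTop (nhds 0)) := by
  set a : Fin N → ℕ → ℝ :=
    fun i s => ‖((Nat.factorial s : ℕ) : K)⁻¹ • (D i) ^ s‖ * η ^ s with ha
  have ha_nonneg : ∀ i s, 0 ≤ a i s := fun i s => by positivity
  constructor
  · intro h i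
    rw [Metric.tendsto_atTop]
    intro ε hε
    obtain ⟨S, hS⟩ := h ε hε
    refine ⟨S, fun s hs => ?_⟩
    have hsum : (∑ l, (fun l : Fin N => if l = i then s else 0) l) = s := by
      simp [Finset.sum_ite_eq']
    have key := hS (fun l => if l = i then s else 0) (by rw [hsum]; exact hs)
    rw [hsum] at key
    have hfac : (∏ l, Nat.factorial (if l = i then s else 0)) = Nat.factorial s := by
      simp [apply_ite Nat.factorial, Finset.prod_ite_eq']
    have hprod : (List.ofFn fun l => (D l) ^ (if l = i then s else 0)).prod = (D i) ^ s := by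
      rw [ofFn_prod_single (fun l => (D l) ^ (if l = i then s else 0)) i
        (fun l hl => by simp [hl]), if_pos rfl]
    rw [hfac, hprod] at key
    rw [dist_zero_right, Real.norm_of_nonneg (ha_nonneg i s)]
    exact key
  · intro h ε hε
    -- each a i is bounded
    have hb : ∀ i : Fin N, ∃ C : ℝ, ∀ s, a i s ≤ C := by
      intro i
      obtain ⟨C, hC⟩ := (h i).bddAbove_range
      exact ⟨C, fun s => hC ⟨s, rfl⟩⟩
    choose C hC using hb
    set M : ℝ := 1 + ∑ i, C i with hM
    have hCnonneg : ∀ i, 0 ≤ C i := fun i => le_trans (ha_nonneg i 0) (hC i 0)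
    have hMle : ∀ i s, a i s ≤ M := by
      intro i s
      calc a i s ≤ C i := hC i s
        _ ≤ ∑ l, C l := Finset.single_le_sum (fun l _ => hCnonneg l) (Finset.mem_univ i)
        _ ≤ M := by rw [hM]; linarith
    have hM1 : 1 ≤ M := by
      rw [hM]
      have : 0 ≤ ∑ i, C i := Finset.sum_nonneg fun i _ => hCnonneg i
      linarith
    have hMpow : (0:ℝ) < M ^ (N - 1) := pow_pos (by linarith) _
    have hε' : 0 < ε / M ^ (N - 1) := div_pos hε hMpow
    have hSi : ∀ i : Fin N, ∃ Si : ℕ, ∀ s, Si ≤ s → a i s < ε / M ^ (N - 1) := by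
      intro i
      have := (Metric.tendsto_atTop.mp (h i)) _ hε'
      obtain ⟨Si, hSi⟩ := this
      refine ⟨Si, fun s hs => ?_⟩
      have := hSi s hs
      rwa [dist_zero_right, Real.norm_of_nonneg (ha_nonneg i s)] at this
    choose Si hSi using hSi
    set T : ℕ := Finset.univ.sup Si with hT
    refine ⟨N * T + 1, fun j hj => ?_⟩
    -- find a coordinate with large exponent
    have hex : ∃ l0 : Fin N, T < j l0 := by
      by_contra hcon
      push_neg at hcon
      have : (∑ l, j l) ≤ N * T := by
        calc (∑ l, j l) ≤ ∑ _l : Fin N, T := Finset.sum_le_sum fun l _ => hcon l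
          _ = N * T := by simp [Finset.sum_const, Finset.card_univ, mul_comm]
      omega
    obtain ⟨l0, hl0⟩ := hex
    have hl0' : Si l0 ≤ j l0 := le_trans (Finset.le_sup (Finset.mem_univ l0)) (le_of_lt hl0)
    -- bound the term by the product of axis terms
    have hbound :
        ‖((∏ l, Nat.factorial (j l) : ℕ) : K)⁻¹ • (List.ofFn fun l => (D l) ^ (j l)).prod‖ *
          η ^ (∑ l, j l) ≤ ∏ l, a l (j l) := by
      rw [norm_smul]
      have h1 : ‖((∏ l, Nat.factorial (j l) : ℕ) : K)⁻¹‖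
          = ∏ l, ‖((Nat.factorial (j l) : ℕ) : K)⁻¹‖ := by
        push_cast
        rw [norm_inv, norm_prod, ← Finset.prod_inv_distrib]
        simp [norm_inv]
      have h2 : ‖(List.ofFn fun l => (D l) ^ (j l)).prod‖ ≤ ∏ l, ‖(D l) ^ (j l)‖ := by
        have hne : (List.ofFn fun l => (D l) ^ (j l)) ≠ [] := by
          rw [Ne, List.ofFn_eq_nil_iff]; omega
        calc ‖(List.ofFn fun l => (D l) ^ (j l)).prod‖
            ≤ ((List.ofFn fun l => (D l) ^ (j l)).map norm).prod := List.norm_prod_le' hne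
          _ = ∏ l, ‖(D l) ^ (j l)‖ := by rw [List.map_ofFn, List.prod_ofFn]; rfl
      have h3 : η ^ (∑ l, j l) = ∏ l, η ^ (j l) :=
        (Finset.prod_pow_eq_pow_sum _ _ _).symm
      calc ‖((∏ l, Nat.factorial (j l) : ℕ) : K)⁻¹‖ *
            ‖(List.ofFn fun l => (D l) ^ (j l)).prod‖ * η ^ (∑ l, j l)
          ≤ (∏ l, ‖((Nat.factorial (j l) : ℕ) : K)⁻¹‖) * (∏ l, ‖(D l) ^ (j l)‖) *
            (∏ l, η ^ (j l)) := by
            rw [h1, h3]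
            apply mul_le_mul_of_nonneg_right _ (Finset.prod_nonneg fun l _ => by positivity)
            exact mul_le_mul_of_nonneg_left h2 (Finset.prod_nonneg fun l _ => norm_nonneg _)
        _ = ∏ l, a l (j l) := by
            rw [← Finset.prod_mul_distrib, ← Finset.prod_mul_distrib]
            exact Finset.prod_congr rfl fun l _ => by simp [ha, norm_smul]
    have hfinal : (∏ l, a l (j l)) < ε := by
      rw [← Finset.mul_prod_erase _ _ (Finset.mem_univ l0)]
      have hrest : (∏ l ∈ Finset.univ.erase l0, a l (j l)) ≤ M ^ (N - 1) := by
        calc (∏ l ∈ Finset.univ.erase l0, a l (j l))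
            ≤ ∏ _l ∈ Finset.univ.erase l0, M :=
              Finset.prod_le_prod (fun l _ => ha_nonneg l (j l)) (fun l _ => hMle l (j l))
          _ = M ^ (N - 1) := by
              rw [Finset.prod_const, Finset.card_erase_of_mem (Finset.mem_univ l0),
                Finset.card_univ, Fintype.card_fin]
      calc a l0 (j l0) * ∏ l ∈ Finset.univ.erase l0, a l (j l)
          ≤ a l0 (j l0) * M ^ (N - 1) :=
            mul_le_mul_of_nonneg_left hrest (ha_nonneg l0 (j l0))
        _ < (ε / M ^ (N - 1)) * M ^ (N - 1) :=
            mul_lt_mul_of_pos_right (hSi l0 _ hl0') hMpow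
        _ = ε := div_mul_cancel₀ ε (ne_of_gt hMpow)
    exact lt_of_le_of_lt hbound hfinal
end
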